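/- arXiv:math/0506091 — 3 statements merged into one kernel-verified Lean document; each statement's English description precedes it below -/
import Mathlib

section
/- If the nonnegative measure σ on [-π,π] is nonatomic (continuous distribution function), then lim_{N→∞} (1/N) ‖Q_N‖₂ = 0, where Q_N = (b(j-k))_{j,k=0}^{N-1} and b are the trigonometric moments of σ. -/
open MeasureTheory Filter

/-!
Expanding the squares, `∑_{j,k} |b(j-k)|² = ∬ |D_N(x-y)|² dσ(x) dσ(y)` with the Dirichlet-type
kernel `D_N(w) = ∑_{j<N} e^{ijw}`. The integrand divided by `N²` is bounded by `1`, and it tends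
to `0` wherever `e^{i(x-y)} ≠ 1`, since there the geometric sum `D_N` stays bounded. For a
nonatomic `σ` the exceptional set `{x - y ∈ 2πℤ}` is `σ ⊗ σ`-null (each of its sections is
countable), so dominated convergence gives `‖Q_N‖₂² / N² → 0`.
-/

section

open Complex ComplexConjugate

noncomputable def expSum (N : ℕ) (w : ℝ) : ℂ := ∑ j : Fin N, exp (I * j * w)

theorem expSum_eq_geom_sum (N : ℕ) (w : ℝ) :
    expSum N w = ∑ j ∈ Finset.range N, exp (I * w) ^ j := by
  rw [expSum, Fin.sum_univ_eq_sum_range (fun j : ℕ => exp (I * j * w))]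
  refine Finset.sum_congr rfl fun j _ => ?_
  rw [← exp_nat_mul]
  ring_nf

theorem norm_expSum_le (N : ℕ) (w : ℝ) : ‖expSum N w‖ ≤ N := by
  rw [expSum_eq_geom_sum]
  refine (norm_sum_le _ _).trans ?_
  simp [norm_exp_I_mul_ofReal]

theorem norm_expSum_le_of_exp_ne_one {w : ℝ} (hw : exp (I * w) ≠ 1) (N : ℕ) :
    ‖expSum N w‖ ≤ 2 / ‖exp (I * w) - 1‖ := by
  rw [expSum_eq_geom_sum, geom_sum_eq hw, norm_div]
  gcongr
  calc ‖exp (I * w) ^ N - 1‖ ≤ ‖exp (I * w) ^ N‖ + ‖(1 : ℂ)‖ := norm_sub_le _ _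
    _ = 2 := by rw [norm_pow, norm_exp_I_mul_ofReal]; norm_num

theorem tendsto_norm_expSum_sq_div_sq {w : ℝ} (hw : exp (I * w) ≠ 1) :
    Tendsto (fun N : ℕ => ‖expSum N w‖ ^ 2 / (N : ℝ) ^ 2) atTop (nhds 0) := by
  have hN : Tendsto (fun N : ℕ => (N : ℝ) ^ 2) atTop atTop :=
    (tendsto_pow_atTop two_ne_zero).comp tendsto_natCast_atTop_atTop
  refine squeeze_zero (fun N => by positivity) (fun N => ?_)
    (tendsto_const_nhds (x := (2 / ‖exp (I * w) - 1‖) ^ 2).div_atTop hN)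
  gcongr
  exact norm_expSum_le_of_exp_ne_one hw N

theorem sum_sum_exp_I_mul_sub_eq_sq_norm_expSum (N : ℕ) (w : ℝ) :
    ∑ j : Fin N, ∑ k : Fin N, exp (I * (((j : ℤ) - (k : ℤ) : ℤ) : ℂ) * w) =
      ((‖expSum N w‖ ^ 2 : ℝ) : ℂ) := by
  have hjk : ∀ j k : Fin N, exp (I * (((j : ℤ) - (k : ℤ) : ℤ) : ℂ) * w) =
      exp (I * j * w) * conj (exp (I * k * w)) := by
    intro j k
    rw [← exp_conj, ← exp_add]
    congr 1
    simp only [map_mul, conj_I, conj_natCast, conj_ofReal]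
    push_cast
    ring
  simp only [hjk, ← Finset.mul_sum, ← Finset.sum_mul, ← map_sum]
  rw [mul_conj, normSq_eq_norm_sq, expSum]

theorem sq_norm_integral_exp_eq_integral_prod (μ : Measure ℝ) [IsFiniteMeasure μ] (t : ℝ) :
    ((‖∫ θ : ℝ, exp (I * t * θ) ∂μ‖ ^ 2 : ℝ) : ℂ) =
      ∫ z : ℝ × ℝ, exp (I * t * (z.1 - z.2 : ℝ)) ∂μ.prod μ := by
  have hconj : ∫ θ : ℝ, exp (-(I * t * θ)) ∂μ = conj (∫ θ : ℝ, exp (I * t * θ) ∂μ) := by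
    rw [← integral_conj]
    congr 1 with θ
    rw [← exp_conj]
    simp
  have hsplit : ∀ z : ℝ × ℝ, exp (I * t * (z.1 - z.2 : ℝ)) =
      exp (I * t * z.1) * exp (-(I * t * z.2)) := by
    intro z
    rw [← exp_add]
    push_cast
    ring_nf
  simp only [hsplit]
  rw [integral_prod_mul (fun x : ℝ => exp (I * t * x)) (fun y : ℝ => exp (-(I * t * y))),
    hconj, mul_conj, normSq_eq_norm_sq]

theorem ae_prod_exp_I_mul_sub_ne_one (μ ν : Measure ℝ) [SFinite ν] [NullSingletonClass ν] :
    ∀ᵐ z ∂μ.prod ν, exp (I * (z.1 - z.2 : ℝ)) ≠ 1 := by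
  have hmeas : MeasurableSet {z : ℝ × ℝ | exp (I * (z.1 - z.2 : ℝ)) ≠ 1} :=
    (measurableSet_singleton 1).compl.preimage (by fun_prop)
  rw [Measure.ae_prod_iff_ae_ae hmeas]
  refine ae_of_all _ fun x => ?_
  have hroots : {y : ℝ | exp (I * (x - y : ℝ)) = 1} ⊆
      Set.range fun n : ℤ => x - n * (2 * Real.pi) := by
    intro y hy
    obtain ⟨n, hn⟩ := exp_eq_one_iff.mp hy
    refine ⟨n, ?_⟩
    have : ((x - y : ℝ) : ℂ) = ((n * (2 * Real.pi) : ℝ) : ℂ) := by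
      apply mul_left_cancel₀ I_ne_zero
      rw [hn]; push_cast; ring
    linarith [ofReal_injective this]
  exact ((Set.countable_range _).mono hroots).ae_notMem ν

theorem sum_sum_sq_norm_integral_exp_eq_integral_prod (μ : Measure ℝ) [IsFiniteMeasure μ]
    (N : ℕ) :
    ∑ j : Fin N, ∑ k : Fin N, ‖∫ θ : ℝ, exp (I * (((j : ℤ) - (k : ℤ) : ℤ) : ℂ) * θ) ∂μ‖ ^ 2 =
      ∫ z : ℝ × ℝ, ‖expSum N (z.1 - z.2)‖ ^ 2 ∂μ.prod μ := by
  have hint : ∀ t : ℤ, Integrable (fun z : ℝ × ℝ => exp (I * t * (z.1 - z.2 : ℝ))) (μ.prod μ) :=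
    fun t => (integrable_const (1 : ℝ)).mono' (by fun_prop)
      (ae_of_all _ fun z => by simp [norm_exp])
  apply ofReal_injective
  calc ((∑ j : Fin N, ∑ k : Fin N,
          ‖∫ θ : ℝ, exp (I * (((j : ℤ) - (k : ℤ) : ℤ) : ℂ) * θ) ∂μ‖ ^ 2 : ℝ) : ℂ)
      = ∑ j : Fin N, ∑ k : Fin N, ∫ z : ℝ × ℝ,
          exp (I * (((j : ℤ) - (k : ℤ) : ℤ) : ℂ) * (z.1 - z.2 : ℝ)) ∂μ.prod μ := by
        simp only [ofReal_sum]
        refine Finset.sum_congr rfl fun j _ => Finset.sum_congr rfl fun k _ => ?_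
        simpa only [ofReal_intCast] using sq_norm_integral_exp_eq_integral_prod μ (j - k : ℤ)
    _ = ∫ z : ℝ × ℝ, ∑ j : Fin N, ∑ k : Fin N,
          exp (I * (((j : ℤ) - (k : ℤ) : ℤ) : ℂ) * (z.1 - z.2 : ℝ)) ∂μ.prod μ := by
        rw [integral_finsetSum _ fun j _ => integrable_finsetSum _ fun k _ => hint _]
        exact Finset.sum_congr rfl fun j _ => (integral_finsetSum _ fun k _ => hint _).symm
    _ = ((∫ z : ℝ × ℝ, ‖expSum N (z.1 - z.2)‖ ^ 2 ∂μ.prod μ : ℝ) : ℂ) := by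
        simp only [sum_sum_exp_I_mul_sub_eq_sq_norm_expSum]
        exact integral_ofReal

theorem tendsto_integral_norm_expSum_sq_div_sq (μ ν : Measure ℝ) [IsFiniteMeasure μ]
    [IsFiniteMeasure ν] [NullSingletonClass ν] :
    Tendsto (fun N : ℕ => ∫ z : ℝ × ℝ, ‖expSum N (z.1 - z.2)‖ ^ 2 / (N : ℝ) ^ 2 ∂μ.prod ν)
      atTop (nhds 0) := by
  have hbound : ∀ (N : ℕ) (w : ℝ), ‖expSum N w‖ ^ 2 / (N : ℝ) ^ 2 ≤ 1 := by
    intro N w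
    rcases N.eq_zero_or_pos with rfl | hN
    · simp
    · rw [div_le_one (by positivity)]
      exact pow_le_pow_left₀ (norm_nonneg _) (norm_expSum_le N w) 2
  simpa using tendsto_integral_of_dominated_convergence (fun _ => (1 : ℝ))
    (fun N => by unfold expSum; fun_prop) (integrable_const 1)
    (fun N => ae_of_all _ fun z => by
      rw [Real.norm_of_nonneg (by positivity)]; exact hbound N _)
    ((ae_prod_exp_I_mul_sub_ne_one μ ν).mono fun z hz => tendsto_norm_expSum_sq_div_sq hz)

end

open Real

theorem hs_norm_o_N_of_nonatomic_general
    (μ : Measure ℝ) [IsFiniteMeasure μ]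
    (hna : ∀ x : ℝ, μ {x} = 0)
    (b : ℤ → ℂ) (hb : ∀ t : ℤ, b t = ∫ θ : ℝ, Complex.exp (Complex.I * (t : ℂ) * (θ : ℂ)) ∂μ) :
    Tendsto
      (fun N : ℕ =>
        Real.sqrt (∑ j : Fin N, ∑ k : Fin N, ‖b ((j : ℤ) - (k : ℤ))‖ ^ 2) / (N : ℝ))
      atTop (nhds 0) := by
  have : NullSingletonClass μ := ⟨hna⟩
  have hS : ∀ N : ℕ, ∑ j : Fin N, ∑ k : Fin N, ‖b ((j : ℤ) - (k : ℤ))‖ ^ 2 =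
      ∫ z : ℝ × ℝ, ‖expSum N (z.1 - z.2)‖ ^ 2 ∂μ.prod μ := fun N => by
    simp only [hb]
    exact sum_sum_sq_norm_integral_exp_eq_integral_prod μ N
  have h := (tendsto_integral_norm_expSum_sq_div_sq μ μ).sqrt
  rw [Real.sqrt_zero] at h
  refine h.congr fun N => ?_
  rw [integral_div, ← hS, Real.sqrt_div (by positivity), Real.sqrt_sq (Nat.cast_nonneg N)]

theorem hs_norm_o_N_of_nonatomic
    (μ : Measure ℝ) [IsFiniteMeasure μ] (hsupp : μ (Set.Icc (-π) π)ᶜ = 0)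
    (hna : ∀ x : ℝ, μ {x} = 0)
    (b : ℤ → ℂ) (hb : ∀ t : ℤ, b t = ∫ θ : ℝ, Complex.exp (Complex.I * (t : ℂ) * (θ : ℂ)) ∂μ) :
    Tendsto
      (fun N : ℕ =>
        Real.sqrt (∑ j : Fin N, ∑ k : Fin N, ‖b ((j : ℤ) - (k : ℤ))‖ ^ 2) / (N : ℝ))
      atTop (nhds 0) :=
  hs_norm_o_N_of_nonatomic_general μ hna b hb
end

section
/- Let σ_d be a finite nonnegative purely atomic measure on [-π,π] with finitely many atoms at distinct points θ_α (with exp(iθ_α) pairwise distinct) of masses m_α, and let λ_m^{(d)}(N) be the largest eigenvalue of the Toeplitz matrix Q_N^{(d)} of its trigonometric moments. Then λ_m^{(d)}(N) = N·max_α m_α + O(1) as N → ∞. -/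
/-!
Write `Q_N = F Fᴴ` with `F j α = √(m α) e^{ijθ_α}`, so that `‖Q_N‖ = ‖Fᴴ F‖`. The Gram matrix
`Fᴴ F` has diagonal entries `N m α`, and its off-diagonal entries are `√(m α m β)` times geometric
sums of the unimodular ratio `e^{i(θ_β - θ_α)} ≠ 1`, bounded independently of `N`. Hence `Fᴴ F`
differs by `O(1)` in operator norm from `N • diagonal m`, whose norm is `N · max m`.
-/

/-- The Toeplitz matrix of the purely atomic measure with atoms `θ α` of masses `m α`. -/
noncomputable def atomicToeplitz (s : ℕ) (m : Fin s → ℝ) (θ : Fin s → ℝ) (N : ℕ) :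
    Matrix (Fin N) (Fin N) ℂ :=
  Matrix.of fun j k => ∑ α, (m α : ℂ) * Complex.exp (Complex.I * (((j : ℤ) - (k : ℤ)) : ℂ) * (θ α : ℂ))

open scoped Matrix.Norms.L2Operator
open Matrix

namespace Matrix

variable {𝕜 : Type*} [RCLike 𝕜] {m n : Type*} [Fintype m] [Fintype n] [DecidableEq m]
  [DecidableEq n]

lemma l2_opNorm_mul_conjTranspose_self (A : Matrix m n 𝕜) : ‖A * Aᴴ‖ = ‖Aᴴ * A‖ := by
  have h := l2_opNorm_conjTranspose_mul_self Aᴴ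
  rw [conjTranspose_conjTranspose, l2_opNorm_conjTranspose] at h
  rw [h, l2_opNorm_conjTranspose_mul_self]

lemma l2_opNorm_single (i : m) (j : n) (c : 𝕜) : ‖single i j c‖ = ‖c‖ := by
  have h : ‖single i j c‖ * ‖single i j c‖ = ‖c‖ * ‖c‖ := by
    rw [← l2_opNorm_conjTranspose_mul_self, conjTranspose_single, single_mul_single_same,
      ← diagonal_single, l2_opNorm_diagonal, Pi.norm_single, norm_mul, norm_star]
  exact (mul_self_inj (norm_nonneg _) (norm_nonneg _)).mp h

lemma l2_opNorm_le_sum_norm_apply (A : Matrix m n 𝕜) : ‖A‖ ≤ ∑ i, ∑ j, ‖A i j‖ := by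
  conv_lhs => rw [matrix_eq_sum_single A]
  refine (norm_sum_le _ _).trans (Finset.sum_le_sum fun i _ => ?_)
  refine (norm_sum_le _ _).trans (le_of_eq ?_)
  simp only [l2_opNorm_single]

end Matrix

lemma norm_geom_sum_le {K : Type*} [NormedDivisionRing K] {w : K} (hw : ‖w‖ ≤ 1) (hw1 : w ≠ 1)
    (N : ℕ) : ‖∑ j ∈ Finset.range N, w ^ j‖ ≤ 2 / ‖w - 1‖ := by
  rw [geom_sum_eq hw1, norm_div]
  gcongr
  calc ‖w ^ N - 1‖ ≤ ‖w ^ N‖ + ‖(1 : K)‖ := norm_sub_le _ _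
    _ ≤ 2 := by
      rw [norm_pow, norm_one]
      linarith [pow_le_one₀ (norm_nonneg w) hw (n := N)]

lemma norm_ofReal_comp_eq_iSup {ι : Type*} [Fintype ι] {m : ι → ℝ} (hm : ∀ i, 0 ≤ m i) :
    ‖fun i => (m i : ℂ)‖ = ⨆ i, m i := by
  have hbdd : BddAbove (Set.range m) := (Set.finite_range m).bddAbove
  refine le_antisymm ((pi_norm_le_iff_of_nonneg (Real.iSup_nonneg hm)).mpr fun i => ?_)
    (Real.iSup_le (fun i => ?_) (norm_nonneg _))
  · rw [Complex.norm_real, Real.norm_of_nonneg (hm i)]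
    exact le_ciSup hbdd i
  · simpa [Real.norm_of_nonneg (hm i)] using norm_le_pi_norm (fun i => (m i : ℂ)) i

noncomputable def atomicFactor {ι : Type*} (m : ι → ℝ) (z : ι → ℂ) (N : ℕ) : Matrix (Fin N) ι ℂ :=
  of fun j α => (Real.sqrt (m α) : ℂ) * z α ^ (j : ℕ)

lemma conjTranspose_atomicFactor_mul_apply {ι : Type*} (m : ι → ℝ) (z : ι → ℂ) (N : ℕ) (α β : ι) :
    ((atomicFactor m z N)ᴴ * atomicFactor m z N) α β =
      (Real.sqrt (m α) * Real.sqrt (m β) : ℝ) * ∑ j ∈ Finset.range N, (star (z α) * z β) ^ j := by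
  simp only [mul_apply, conjTranspose_apply, atomicFactor, of_apply, Finset.mul_sum,
    ← Fin.sum_univ_eq_sum_range (fun j => (star (z α) * z β) ^ j)]
  refine Finset.sum_congr rfl fun j _ => ?_
  simp only [star_mul', star_pow, Complex.star_def, Complex.conj_ofReal]
  push_cast
  ring

lemma exists_bound_conjTranspose_atomicFactor_mul_sub {ι : Type*} [Fintype ι] [DecidableEq ι]
    {m : ι → ℝ} (hm : ∀ α, 0 ≤ m α) {z : ι → ℂ} (hz : ∀ α, ‖z α‖ = 1)
    (hinj : Function.Injective z) :
    ∃ C : ℝ, ∀ N : ℕ,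
      ‖(atomicFactor m z N)ᴴ * atomicFactor m z N - (N : ℂ) • diagonal fun α => (m α : ℂ)‖ ≤ C := by
  refine ⟨∑ α, ∑ β, Real.sqrt (m α) * Real.sqrt (m β) * (2 / ‖star (z α) * z β - 1‖),
    fun N => (l2_opNorm_le_sum_norm_apply _).trans
      (Finset.sum_le_sum fun α _ => Finset.sum_le_sum fun β _ => ?_)⟩
  have hunit : ∀ α, star (z α) * z α = 1 := fun α => by
    rw [RCLike.star_def, RCLike.conj_mul, hz]; simp
  rw [Matrix.sub_apply, Matrix.smul_apply, conjTranspose_atomicFactor_mul_apply]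
  rcases eq_or_ne α β with rfl | hne
  · -- on the diagonal the denominator vanishes and `x / 0 = 0` makes the bound zero
    rw [diagonal_apply_eq, hunit, ← Real.sqrt_mul (hm α), Real.sqrt_mul_self (hm α)]
    simp [mul_comm]
  · rw [diagonal_apply_ne _ hne, smul_zero, sub_zero, norm_mul, Complex.norm_real,
      Real.norm_of_nonneg (by positivity)]
    gcongr
    refine norm_geom_sum_le ?_ (fun h => hne (hinj ?_)) N
    · rw [norm_mul, norm_star, hz, hz, one_mul]
    · rw [← mul_one (z α), ← h, ← mul_assoc, mul_comm (z α), hunit, one_mul]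

lemma atomicToeplitz_eq_atomicFactor_mul_conjTranspose (s : ℕ) {m : Fin s → ℝ}
    (hm : ∀ α, 0 ≤ m α) (θ : Fin s → ℝ) (N : ℕ) :
    atomicToeplitz s m θ N =
      atomicFactor m (fun α => Complex.exp (Complex.I * θ α)) N *
        (atomicFactor m (fun α => Complex.exp (Complex.I * θ α)) N)ᴴ := by
  ext j k
  simp only [atomicToeplitz, atomicFactor, mul_apply, conjTranspose_apply, of_apply]
  refine Finset.sum_congr rfl fun α _ => ?_
  have hsq : (Real.sqrt (m α) : ℂ) * Real.sqrt (m α) = m α := by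
    rw [← Complex.ofReal_mul, Real.mul_self_sqrt (hm α)]
  simp only [star_mul', star_pow, Complex.star_def, ← Complex.exp_conj, map_mul, Complex.conj_I,
    Complex.conj_ofReal]
  rw [← Complex.exp_nat_mul, ← Complex.exp_nat_mul, mul_mul_mul_comm, hsq, ← Complex.exp_add]
  congr 2
  push_cast
  ring

theorem atomic_lambda_max_asymptotics (s : ℕ)
    (m : Fin s → ℝ) (hm : ∀ α, 0 < m α) (θ : Fin s → ℝ)
    (hdist : Function.Injective fun α => Complex.exp (Complex.I * (θ α : ℂ))) :
    ∃ C : ℝ, ∀ N : ℕ,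
      |‖Matrix.toEuclideanCLM (𝕜 := ℂ) (atomicToeplitz s m θ N)‖ - (N : ℝ) * ⨆ α, m α| ≤ C := by
  have hm₀ : ∀ α, 0 ≤ m α := fun α => (hm α).le
  obtain ⟨C, hC⟩ := exists_bound_conjTranspose_atomicFactor_mul_sub hm₀
    (fun α => Complex.norm_exp_I_mul_ofReal (θ α)) hdist
  refine ⟨C, fun N => ?_⟩
  have hdiag : ‖(N : ℂ) • diagonal fun α => (m α : ℂ)‖ = N * ⨆ α, m α := by
    rw [norm_smul, l2_opNorm_diagonal, norm_ofReal_comp_eq_iSup hm₀, Complex.norm_natCast]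
  rw [l2_opNorm_toEuclideanCLM, atomicToeplitz_eq_atomicFactor_mul_conjTranspose s hm₀,
    l2_opNorm_mul_conjTranspose_self, ← hdiag]
  exact (abs_norm_sub_norm_le _ _).trans (hC N)
end

section
/- For trigonometric moments b(k) of a finite nonnegative measure on [-π,π] with maximal atom mass max_α m_α, the Cesàro-type bound (1/2)·max_α m_α ≤ liminf_{N→∞} (1/N) Σ_{p=0}^{N-1} |b(p)| holds. Consequently, if lim_{N→∞} (1/N) Σ_{p=0}^{N-1} |b(p)| = 0 then the measure is nonatomic. -/
open MeasureTheory Real Filter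

lemma cesaro_pow (w : ℂ) (hw : ‖w‖ = 1) :
    Tendsto (fun N : ℕ => (N : ℂ)⁻¹ * ∑ p ∈ Finset.range N, w ^ p) atTop
      (nhds (if w = 1 then 1 else 0)) := by
  by_cases h1 : w = 1
  · simp only [h1, if_pos rfl, one_pow, Finset.sum_const, Finset.card_range, nsmul_eq_mul,
      mul_one]
    apply Tendsto.congr' (f₁ := fun _ : ℕ => (1:ℂ))
    · filter_upwards [eventually_ge_atTop 1] with N hN
      have : (N : ℂ) ≠ 0 := Nat.cast_ne_zero.mpr (by omega)
      field_simp
    · exact tendsto_const_nhds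
  · rw [if_neg h1]
    have hb : ∀ N : ℕ, ‖(N : ℂ)⁻¹ * ∑ p ∈ Finset.range N, w ^ p‖
        ≤ (N : ℝ)⁻¹ * (2 / ‖w - 1‖) := by
      intro N
      rw [norm_mul, norm_inv, Complex.norm_natCast]
      gcongr
      rw [geom_sum_eq h1, norm_div]
      gcongr
      calc ‖w ^ N - 1‖ ≤ ‖w ^ N‖ + ‖(1:ℂ)‖ := norm_sub_le _ _
        _ = 2 := by simp [norm_pow, hw]; norm_num
    refine squeeze_zero_norm hb ?_
    have := tendsto_inv_atTop_nhds_zero_nat (𝕜 := ℝ)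
    simpa using this.mul_const (2 / ‖w - 1‖)

lemma key_atom_le (μ : Measure ℝ) [IsFiniteMeasure μ] (b : ℤ → ℂ)
    (hb : ∀ t : ℤ, b t = ∫ θ : ℝ, Complex.exp (Complex.I * (t : ℂ) * (θ : ℂ)) ∂μ) (θ₀ : ℝ) :
    (μ {θ₀}).toReal
      ≤ liminf (fun N : ℕ => (∑ p ∈ Finset.range N, ‖b (p : ℤ)‖) / (N : ℝ)) atTop := by
  set z : ℝ → ℂ := fun θ => Complex.exp (Complex.I * ((θ : ℂ) - (θ₀ : ℂ))) with hz
  have hz_cont : Continuous z :=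
    Complex.continuous_exp.comp (continuous_const.mul (Complex.continuous_ofReal.sub
      continuous_const))
  have hz_norm : ∀ θ : ℝ, ‖z θ‖ = 1 := by
    intro θ
    simp [hz, Complex.norm_exp]
  set F : ℕ → ℝ → ℂ := fun N θ => (N : ℂ)⁻¹ * ∑ p ∈ Finset.range N, z θ ^ p with hF
  set A : Set ℝ := z ⁻¹' {1} with hAdef
  have hA : MeasurableSet A := hz_cont.measurable (measurableSet_singleton 1)
  set g : ℝ → ℂ := A.indicator (fun _ => (1:ℂ)) with hg
  -- pointwise limit
  have hpt : ∀ θ : ℝ, Tendsto (fun N => F N θ) atTop (nhds (g θ)) := by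
    intro θ
    have := cesaro_pow (z θ) (hz_norm θ)
    have hgθ : g θ = if z θ = 1 then 1 else 0 := by
      classical
      rw [hg, Set.indicator_apply]
      congr 1
    rw [hgθ]
    exact this
  -- integrability of powers
  have hint : ∀ p : ℕ, Integrable (fun θ : ℝ => z θ ^ p) μ := by
    intro p
    refine (integrable_const (1:ℝ)).mono' ((hz_cont.pow p).aestronglyMeasurable)
      (ae_of_all _ fun θ => ?_)
    simp [norm_pow, hz_norm θ]
  -- dominated convergence
  have htend : Tendsto (fun N => ∫ θ, F N θ ∂μ) atTop (nhds (∫ θ, g θ ∂μ)) := by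
    refine tendsto_integral_of_dominated_convergence (fun _ => (1:ℝ))
      (fun N => ?_) (integrable_const 1) (fun N => ae_of_all _ fun θ => ?_)
      (ae_of_all _ hpt)
    · exact (continuous_const.mul (continuous_finset_sum _
        (fun p _ => hz_cont.pow p))).aestronglyMeasurable
    · calc ‖F N θ‖ = (N:ℝ)⁻¹ * ‖∑ p ∈ Finset.range N, z θ ^ p‖ := by
            rw [hF]; rw [norm_mul, norm_inv, Complex.norm_natCast]
        _ ≤ (N:ℝ)⁻¹ * N := by
            gcongr
            calc ‖∑ p ∈ Finset.range N, z θ ^ p‖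
                ≤ ∑ p ∈ Finset.range N, ‖z θ ^ p‖ := norm_sum_le _ _
              _ = N := by simp [norm_pow, hz_norm θ]
        _ ≤ 1 := by
            rcases eq_or_ne N 0 with h | h
            · simp [h]
            · rw [inv_mul_cancel₀ (Nat.cast_ne_zero.mpr h)]
  -- value of limit integral
  have hgint : ∫ θ, g θ ∂μ = ((μ A).toReal : ℂ) := by
    rw [hg, integral_indicator_const _ hA]
    simp [measureReal_def]
  -- value of ∫ F N
  have hFint : ∀ N : ℕ, ∫ θ, F N θ ∂μ
      = (N : ℂ)⁻¹ * ∑ p ∈ Finset.range N,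
          Complex.exp (-(Complex.I * (p : ℂ) * (θ₀ : ℂ))) * b (p : ℤ) := by
    intro N
    have hzp : ∀ p : ℕ, ∀ θ : ℝ, z θ ^ p
        = Complex.exp (-(Complex.I * (p : ℂ) * (θ₀ : ℂ)))
          * Complex.exp (Complex.I * (p : ℂ) * (θ : ℂ)) := by
      intro p θ
      rw [hz, ← Complex.exp_nat_mul, ← Complex.exp_add]
      congr 1
      ring
    have hone : ∀ p : ℕ, ∫ θ, z θ ^ p ∂μ
        = Complex.exp (-(Complex.I * (p : ℂ) * (θ₀ : ℂ))) * b (p : ℤ) := by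
      intro p
      rw [hb (p : ℤ)]
      push_cast
      simp_rw [hzp p]
      rw [integral_const_mul]
    simp_rw [hF]
    rw [integral_const_mul, integral_finset_sum _ (fun p _ => hint p)]
    simp_rw [hone]
  -- norm bound
  have hnorm : ∀ N : ℕ, ‖∫ θ, F N θ ∂μ‖ ≤ (∑ p ∈ Finset.range N, ‖b (p : ℤ)‖) / (N : ℝ) := by
    intro N
    rw [hFint N, norm_mul, norm_inv, Complex.norm_natCast, div_eq_inv_mul]
    gcongr
    calc ‖∑ p ∈ Finset.range N, Complex.exp (-(Complex.I * (p : ℂ) * (θ₀ : ℂ))) * b (p : ℤ)‖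
        ≤ ∑ p ∈ Finset.range N, ‖Complex.exp (-(Complex.I * (p : ℂ) * (θ₀ : ℂ))) * b (p : ℤ)‖ :=
          norm_sum_le _ _
      _ = ∑ p ∈ Finset.range N, ‖b (p : ℤ)‖ := by
          refine Finset.sum_congr rfl fun p _ => ?_
          rw [norm_mul]
          simp [Complex.norm_exp]
  have hnormtend : Tendsto (fun N => ‖∫ θ, F N θ ∂μ‖) atTop (nhds (μ A).toReal) := by
    have := htend.norm
    rw [hgint] at this
    simpa [Complex.norm_real, abs_of_nonneg ENNReal.toReal_nonneg] using this
  have h1 : (μ {θ₀}).toReal ≤ (μ A).toReal := by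
    refine ENNReal.toReal_mono (measure_ne_top μ A) (measure_mono ?_)
    intro x hx
    rw [Set.mem_singleton_iff] at hx
    subst hx
    simp [hAdef, hz]
  refine h1.trans ?_
  rw [← hnormtend.liminf_eq]
  have hbub : ∀ p : ℕ, ‖b (p : ℤ)‖ ≤ (μ Set.univ).toReal := by
    intro p
    rw [hb (p : ℤ)]
    have := norm_integral_le_of_norm_le_const (μ := μ)
      (f := fun θ : ℝ => Complex.exp (Complex.I * ((p : ℤ) : ℂ) * (θ : ℂ))) (C := 1)
      (ae_of_all _ fun θ => by simp [Complex.norm_exp])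
    rw [← measureReal_def]
    simpa using this
  refine liminf_le_liminf (Eventually.of_forall hnorm) ?_ ?_
  · exact isBoundedUnder_of ⟨0, fun N => norm_nonneg _⟩
  · refine (isBoundedUnder_of ⟨(μ Set.univ).toReal, fun N => ?_⟩).isCoboundedUnder_ge
    rcases eq_or_ne N 0 with h | h
    · simp [h, ENNReal.toReal_nonneg]
    · rw [div_le_iff₀ (by positivity)]
      calc ∑ p ∈ Finset.range N, ‖b (p : ℤ)‖
          ≤ ∑ _p ∈ Finset.range N, (μ Set.univ).toReal :=
            Finset.sum_le_sum fun p _ => hbub p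
        _ = (μ Set.univ).toReal * N := by simp [mul_comm]

theorem cesaro_abs_moments_bound_and_stability
    (μ : Measure ℝ) [IsFiniteMeasure μ] (hsupp : μ (Set.Icc (-π) π)ᶜ = 0)
    (b : ℤ → ℂ) (hb : ∀ t : ℤ, b t = ∫ θ : ℝ, Complex.exp (Complex.I * (t : ℂ) * (θ : ℂ)) ∂μ) :
    ((1 / 2) * (⨆ θ : ℝ, (μ {θ}).toReal)
        ≤ liminf (fun N : ℕ => (∑ p ∈ Finset.range N, ‖b (p : ℤ)‖) / (N : ℝ)) atTop)
    ∧ (Tendsto (fun N : ℕ => (∑ p ∈ Finset.range N, ‖b (p : ℤ)‖) / (N : ℝ)) atTop (nhds 0) →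
        ∀ x : ℝ, μ {x} = 0) := by
  have key := fun θ₀ : ℝ => key_atom_le μ b hb θ₀
  constructor
  · have hsup : (⨆ θ : ℝ, (μ {θ}).toReal)
        ≤ liminf (fun N : ℕ => (∑ p ∈ Finset.range N, ‖b (p : ℤ)‖) / (N : ℝ)) atTop :=
      ciSup_le key
    have h0 : 0 ≤ ⨆ θ : ℝ, (μ {θ}).toReal :=
      Real.iSup_nonneg fun θ => ENNReal.toReal_nonneg
    nlinarith
  · intro hlim x
    have hL : liminf (fun N : ℕ => (∑ p ∈ Finset.range N, ‖b (p : ℤ)‖) / (N : ℝ)) atTop = 0 :=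
      hlim.liminf_eq
    have hx : (μ {x}).toReal ≤ 0 := by
      have := key x
      rw [hL] at this
      exact this
    have hx0 : (μ {x}).toReal = 0 := le_antisymm hx ENNReal.toReal_nonneg
    exact ((ENNReal.toReal_eq_zero_iff _).mp hx0).resolve_right (measure_ne_top μ _)
end
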